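/- As t → +∞, Φ(t) is asymptotic to Pólya's kernel Φ_P(t); that is, lim_{t→+∞} Φ(t)/Φ_P(t) = 1, where Φ(t) = Σ_{n=1}^{∞} (2π² n⁴ e^{9t/4} − 3π n² e^{5t/4}) e^{−π n² e^t} and Φ_P(t) = 4π² cosh(9t/4) e^{−2π cosh t}. -/

import Mathlib

open Real Filter

/-- The Riemann xi kernel
`Φ(t) = ∑_{n=1}^{∞} (2π² n⁴ e^{9t/4} − 3π n² e^{5t/4}) e^{−π n² e^t}`. -/
noncomputable def Phi (t : ℝ) : ℝ :=
  ∑' n : ℕ,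
    (2 * π ^ 2 * (n + 1 : ℝ) ^ 4 * exp (9 * t / 4)
      - 3 * π * (n + 1 : ℝ) ^ 2 * exp (5 * t / 4)) * exp (-π * (n + 1 : ℝ) ^ 2 * exp t)

/-- Pólya's kernel `Φ_P(t) = 4π² cosh(9t/4) e^{−2π cosh t}`. -/
noncomputable def PhiP (t : ℝ) : ℝ :=
  4 * π ^ 2 * cosh (9 * t / 4) * exp (-2 * π * cosh t)

/-!
Multiply both kernels by `e^{2π cosh t − 9t/4}`. Pólya's kernel becomes `2π²(1 + e^{−9t/2})`.
The `n`-th summand of `Φ` becomes `(2π²n⁴ − 3πn²e^{−t}) e^{πe^{−t}} e^{−π(n²−1)e^t}`, which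
tends to `2π²` for `n = 1` and to `0` for `n ≥ 2`; for `t ≥ 0` these are dominated by a multiple
of `n⁴e^{−πn²}`, so by Tannery's theorem the rescaled `Φ` tends to `2π²` as well.
-/

open Topology

lemma summable_pow_mul_exp_neg_mul_sq (k : ℕ) {c : ℝ} (hc : 0 < c) :
    Summable fun n : ℕ => (n : ℝ) ^ k * exp (-c * n ^ 2) := by
  refine (summable_pow_mul_exp_neg_nat_mul k hc).of_nonneg_of_le (fun _ => by positivity)
    fun n => ?_
  have hn : (n : ℝ) ≤ (n : ℝ) ^ 2 := by
    rcases n.eq_zero_or_pos with rfl | hn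
    · simp
    · exact le_self_pow₀ (by exact_mod_cast hn) two_ne_zero
  exact mul_le_mul_of_nonneg_left (exp_le_exp.2 (by nlinarith)) (by positivity)

noncomputable def scaledPhiTerm (N t : ℝ) : ℝ :=
  (2 * π ^ 2 * N ^ 4 - 3 * π * N ^ 2 * exp (-t)) * exp (π * exp (-t))
    * exp (-π * (N ^ 2 - 1) * exp t)

lemma summand_mul_exp_eq_scaledPhiTerm (N t : ℝ) :
    (2 * π ^ 2 * N ^ 4 * exp (9 * t / 4) - 3 * π * N ^ 2 * exp (5 * t / 4))
        * exp (-π * N ^ 2 * exp t) * exp (2 * π * cosh t - 9 * t / 4)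
      = scaledPhiTerm N t := by
  have h5 : exp (5 * t / 4) = exp (9 * t / 4) * exp (-t) := by rw [← exp_add]; ring_nf
  have hc : exp (2 * π * cosh t - 9 * t / 4)
      = exp (π * exp t) * exp (π * exp (-t)) / exp (9 * t / 4) := by
    rw [cosh_eq, ← exp_add, ← exp_sub]; ring_nf
  have hN : exp (-π * (N ^ 2 - 1) * exp t) = exp (-π * N ^ 2 * exp t) * exp (π * exp t) := by
    rw [← exp_add]; ring_nf
  rw [scaledPhiTerm, h5, hc, hN]
  field_simp

lemma tendsto_scaledPhiTerm {N L : ℝ}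
    (h : Tendsto (fun t => exp (-π * (N ^ 2 - 1) * exp t)) atTop (𝓝 L)) :
    Tendsto (scaledPhiTerm N) atTop (𝓝 (2 * π ^ 2 * N ^ 4 * L)) := by
  have hexp : Tendsto (fun t : ℝ => exp (-t)) atTop (𝓝 0) := tendsto_exp_neg_atTop_nhds_zero
  have hA : Tendsto (fun t => 2 * π ^ 2 * N ^ 4 - 3 * π * N ^ 2 * exp (-t)) atTop
      (𝓝 (2 * π ^ 2 * N ^ 4)) := by
    simpa using tendsto_const_nhds.sub (hexp.const_mul (3 * π * N ^ 2))
  have hB : Tendsto (fun t => exp (π * exp (-t))) atTop (𝓝 1) := by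
    simpa [Function.comp_def] using
      (continuous_exp.tendsto 0).comp (by simpa using hexp.const_mul π)
  rw [← mul_one (2 * π ^ 2 * N ^ 4)]
  exact (hA.mul hB).mul h

lemma tendsto_scaledPhiTerm_one : Tendsto (scaledPhiTerm 1) atTop (𝓝 (2 * π ^ 2)) := by
  simpa using tendsto_scaledPhiTerm (N := 1) (L := 1) (by simp)

lemma tendsto_scaledPhiTerm_of_one_lt {N : ℝ} (hN : 1 < N) :
    Tendsto (scaledPhiTerm N) atTop (𝓝 0) := by
  have hc : 0 < π * (N ^ 2 - 1) := mul_pos pi_pos (by nlinarith)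
  have h : Tendsto (fun t => -(π * (N ^ 2 - 1) * exp t)) atTop atBot :=
    tendsto_neg_atTop_atBot.comp (tendsto_exp_atTop.const_mul_atTop hc)
  rw [← mul_zero (2 * π ^ 2 * N ^ 4)]
  exact tendsto_scaledPhiTerm
    (by simpa only [neg_mul, Function.comp_def] using tendsto_exp_atBot.comp h)

lemma abs_scaledPhiTerm_le {N t : ℝ} (hN : 1 ≤ N) (ht : 0 ≤ t) :
    |scaledPhiTerm N t| ≤ (2 * π ^ 2 + 3 * π) * exp (2 * π) * (N ^ 4 * exp (-π * N ^ 2)) := by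
  have he : exp (-t) ≤ 1 := exp_le_one_iff.2 (by linarith)
  have he' : 1 ≤ exp t := one_le_exp ht
  have hN2 : N ^ 2 ≤ N ^ 4 := pow_le_pow_right₀ hN (by norm_num)
  have hA : |2 * π ^ 2 * N ^ 4 - 3 * π * N ^ 2 * exp (-t)| ≤ (2 * π ^ 2 + 3 * π) * N ^ 4 :=
    calc _ ≤ |2 * π ^ 2 * N ^ 4| + |3 * π * N ^ 2 * exp (-t)| := abs_sub _ _
      _ = 2 * π ^ 2 * N ^ 4 + 3 * π * N ^ 2 * exp (-t) := by
        rw [abs_of_nonneg (by positivity), abs_of_nonneg (by positivity)]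
      _ ≤ 2 * π ^ 2 * N ^ 4 + 3 * π * N ^ 4 * 1 := by gcongr
      _ = (2 * π ^ 2 + 3 * π) * N ^ 4 := by ring
  have hB : exp (π * exp (-t)) ≤ exp π := exp_le_exp.2 (by nlinarith [pi_pos])
  have hC : exp (-π * (N ^ 2 - 1) * exp t) ≤ exp π * exp (-π * N ^ 2) := by
    rw [← exp_add]
    apply exp_le_exp.2
    have : 0 ≤ π * ((N ^ 2 - 1) * (exp t - 1)) := by
      apply mul_nonneg pi_pos.le; apply mul_nonneg <;> nlinarith
    nlinarith
  rw [scaledPhiTerm, abs_mul, abs_mul, abs_of_pos (exp_pos _), abs_of_pos (exp_pos _),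
    two_mul π, exp_add]
  calc _ ≤ (2 * π ^ 2 + 3 * π) * N ^ 4 * exp π * (exp π * exp (-π * N ^ 2)) := by gcongr
    _ = _ := by ring

lemma tendsto_Phi_mul_exp :
    Tendsto (fun t => Phi t * exp (2 * π * cosh t - 9 * t / 4)) atTop (𝓝 (2 * π ^ 2)) := by
  have hsum : Summable fun n : ℕ => ((n : ℝ) + 1) ^ 4 * exp (-π * ((n : ℝ) + 1) ^ 2) := by
    exact_mod_cast (summable_nat_add_iff 1).2 (summable_pow_mul_exp_neg_mul_sq 4 pi_pos)
  have hlim (n : ℕ) : Tendsto (fun t => scaledPhiTerm (n + 1) t) atTop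
      (𝓝 (if n = 0 then 2 * π ^ 2 else 0)) := by
    rcases n.eq_zero_or_pos with rfl | hn
    · simpa using tendsto_scaledPhiTerm_one
    · simpa [hn.ne'] using tendsto_scaledPhiTerm_of_one_lt (N := n + 1) (by simpa using hn)
  have hbound : ∀ᶠ t in atTop, ∀ n : ℕ, ‖scaledPhiTerm (n + 1) t‖ ≤
      (2 * π ^ 2 + 3 * π) * exp (2 * π) *
        (((n : ℝ) + 1) ^ 4 * exp (-π * ((n : ℝ) + 1) ^ 2)) := by
    filter_upwards [eventually_ge_atTop 0] with t ht n
    exact abs_scaledPhiTerm_le (by simp) ht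
  have hconv := tendsto_tsum_of_dominated_convergence (hsum.mul_left _) hlim hbound
  rw [tsum_ite_eq] at hconv
  refine hconv.congr fun t => ?_
  simp only [Phi, ← tsum_mul_right, summand_mul_exp_eq_scaledPhiTerm]

lemma PhiP_mul_exp (t : ℝ) :
    PhiP t * exp (2 * π * cosh t - 9 * t / 4) = 2 * π ^ 2 * (1 + exp (-(9 * t / 2))) := by
  have hexp : exp (-2 * π * cosh t) * exp (2 * π * cosh t - 9 * t / 4) = exp (-(9 * t / 4)) := by
    rw [← exp_add]; ring_nf
  have hinv : exp (9 * t / 4) * exp (-(9 * t / 4)) = 1 := by rw [← exp_add]; simp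
  have hsq : exp (-(9 * t / 2)) = exp (-(9 * t / 4)) ^ 2 := by rw [sq, ← exp_add]; ring_nf
  rw [PhiP, mul_assoc, hexp, cosh_eq, hsq]
  linear_combination 2 * π ^ 2 * hinv

lemma tendsto_PhiP_mul_exp :
    Tendsto (fun t => PhiP t * exp (2 * π * cosh t - 9 * t / 4)) atTop (𝓝 (2 * π ^ 2)) := by
  simp only [PhiP_mul_exp]
  have h : Tendsto (fun t : ℝ => -(9 * t / 2)) atTop atBot :=
    tendsto_neg_atTop_atBot.comp
      ((tendsto_id.const_mul_atTop (by norm_num)).atTop_div_const (by norm_num))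
  simpa using ((tendsto_exp_atBot.comp h).const_add 1).const_mul (2 * π ^ 2)

/-- As `t → +∞`, `Φ(t)/Φ_P(t) → 1`. -/
theorem Phi_asymptotic_PhiP :
    Tendsto (fun t : ℝ => Phi t / PhiP t) atTop (nhds 1) := by
  have h := tendsto_Phi_mul_exp.div tendsto_PhiP_mul_exp (by positivity)
  rw [div_self (by positivity)] at h
  exact h.congr fun t => mul_div_mul_right _ _ (exp_ne_zero _)
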